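/- Consider the nonlinear system ẋ = A·Z(x) + B·W(x)·u with state x ∈ ℝⁿ and input u ∈ ℝᵐ, where A is a real n×N matrix, B a real n×q matrix, Z : ℝⁿ → ℝᴺ, and W : ℝⁿ → ℝ^{q×m}. Let Ẑ : ℝⁿ → ℝᵖ be differentiable and H : ℝⁿ → ℝ^{N×p} satisfy Z(x) = H(x)·Ẑ(x) for all x. Let U₀ ∈ ℝ^{m×T}, Z₀ ∈ ℝ^{N×T}, Ū₀ ∈ ℝ^{q×T}, D₀, X₁ ∈ ℝ^{n×T} satisfy X₁ = A·Z₀ + B·Ū₀ + D₀, and assume D₀·D₀ᵀ ⪯ R_D·R_Dᵀ for a given R_D ∈ ℝ^{n×T}. Set S := [B A], W̄₀ := [Ū₀ ; Z₀] ∈ ℝ^{(q+N)×T}, and W₀(x) := [W(x)·U₀ ; Z₀] ∈ ℝ^{(q+N)×T}. Suppose there exist a positive definite P ∈ ℝ^{p×p}, a map Y : ℝⁿ → ℝ^{T×p}, and functions ε₁, ε₂ : ℝⁿ → ℝ with ε₁(x) ≥ 0 and ε₂(x) ≥ 0 such that for all x ∈ ℝⁿ: (i) Z₀·Y(x) = H(x)·P,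 and (ii) with G(x) := the Jacobian ∂Ẑ/∂x (a p×n matrix) and Υ_D(x) := ε₂(x)·G(x)·(X₁·X₁ᵀ − R_D·R_Dᵀ)·G(x)ᵀ, the block matrix [[Υ_D(x) − ε₁(x)·I_p, −Y(x)ᵀ·W₀(x)ᵀ − ε₂(x)·G(x)·X₁·W̄₀ᵀ], [−W₀(x)·Y(x) − ε₂(x)·W̄₀·X₁ᵀ·G(x)ᵀ, ε₂(x)·W̄₀·W̄₀ᵀ]] is positive semidefinite. Then, under the feedback u = U₀·Y(x)·P⁻¹·Ẑ(x), for every differentiable solution x : ℝ → ℝⁿ of the closed-loop system, the function t ↦ V(x(t)) with V(x) = Ẑ(x)ᵀ·P⁻¹·Ẑ(x) has derivative at every time t satisfying d/dt V(x(t)) ≤ −ε₁(x(t))·Ẑ(x(t))ᵀ·P⁻¹·P⁻¹·Ẑ(x(t)). (Lyapunov decrease conclusion of Theorem 2, with the SOS conditions relaxed to pointwise positive semidefiniteness; no bound on B is assumed.) -/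

import Mathlib

/-!
With `v = P⁻¹ Ẑ(x)`, condition (i) and the data equation write the closed loop as
`ẋ = S W₀(x) Y(x) v`, so `d/dt V(x) = 2 vᵀ K v` with `K = G S W₀ Y`. The matrix `S = [B A]` is
unknown, but the congruence of the block matrix in (ii) by `[I ; (G S)ᵀ]` needs only
`S W̄₀ = X₁ - D₀`, and it leaves `-(K + Kᵀ) - ε₁ I - ε₂ G (R_D R_Dᵀ - D₀ D₀ᵀ) Gᵀ ⪰ 0`. The noise
bound makes the last term `⪰ 0`, hence `K + Kᵀ ⪯ -ε₁ I`.
-/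

open Matrix

section Calculus

variable {ι : Type*} [Fintype ι] {c d : ℝ → ι → ℝ} {c' d' : ι → ℝ} {t : ℝ}

theorem HasDerivAt.dotProduct (hc : HasDerivAt c c' t) (hd : HasDerivAt d d' t) :
    HasDerivAt (fun s => c s ⬝ᵥ d s) (c' ⬝ᵥ d t + c t ⬝ᵥ d') t :=
  (HasDerivAt.fun_sum fun i (_ : i ∈ Finset.univ) =>
    (hasDerivAt_pi.mp hc i).mul (hasDerivAt_pi.mp hd i)).congr_deriv
      Finset.sum_add_distrib

theorem HasDerivAt.matrix_mulVec {κ : Type*} [Fintype κ] (M : Matrix κ ι ℝ)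
    (hc : HasDerivAt c c' t) : HasDerivAt (fun s => M *ᵥ c s) (M *ᵥ c') t :=
  hasDerivAt_pi.2 fun i =>
    ((hasDerivAt_const t (M i)).dotProduct hc).congr_deriv (by simp [mulVec])

theorem HasDerivAt.dotProduct_mulVec_self {M : Matrix ι ι ℝ} (hM : M.IsSymm)
    (hc : HasDerivAt c c' t) :
    HasDerivAt (fun s => c s ⬝ᵥ M *ᵥ c s) (2 * (M *ᵥ c t ⬝ᵥ c')) t := by
  convert hc.dotProduct (hc.matrix_mulVec M) using 1
  rw [dotProduct_comm c', dotProduct_mulVec, ← mulVec_transpose, hM.eq]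
  ring

end Calculus

section LMI

variable {ι κ ν τ : Type*} [Fintype ι] [Fintype κ] [Fintype ν] [Fintype τ] [DecidableEq ι]

theorem fromRows_transpose_mul_fromBlocks_mul_fromRows
    (G : Matrix ι ν ℝ) (S : Matrix ν κ ℝ) (Wb : Matrix κ τ ℝ) (D R : Matrix ν τ ℝ)
    (M : Matrix κ ι ℝ) (ε₁ ε₂ : ℝ) :
    (fromRows (1 : Matrix ι ι ℝ) (G * S)ᵀ)ᵀ *
      fromBlocks
        (ε₂ • (G * ((S * Wb + D) * (S * Wb + D)ᵀ - R * Rᵀ) * Gᵀ) - ε₁ • 1)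
        (-Mᵀ - ε₂ • (G * (S * Wb + D) * Wbᵀ))
        (-M - ε₂ • (Wb * (S * Wb + D)ᵀ * Gᵀ))
        (ε₂ • (Wb * Wbᵀ)) *
      fromRows (1 : Matrix ι ι ℝ) (G * S)ᵀ =
    -(G * S * M + (G * S * M)ᵀ) - ε₁ • 1 - ε₂ • (G * (R * Rᵀ - D * Dᵀ) * Gᵀ) := by
  rw [transpose_fromRows, fromCols_mul_fromBlocks, fromCols_mul_fromRows]
  simp only [transpose_one, one_mul, mul_one, transpose_transpose, transpose_mul, transpose_add,
    Matrix.mul_add, Matrix.add_mul, Matrix.mul_sub, Matrix.sub_mul, Matrix.mul_neg,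
    Matrix.neg_mul, Matrix.mul_smul, Matrix.smul_mul, Matrix.mul_assoc, smul_sub, smul_add]
  abel

theorem posSemidef_neg_add_transpose_sub_smul_of_fromBlocks
    {G : Matrix ι ν ℝ} {S : Matrix ν κ ℝ} {Wb : Matrix κ τ ℝ} {X D R : Matrix ν τ ℝ}
    {M : Matrix κ ι ℝ} {ε₁ ε₂ : ℝ} (hX : X = S * Wb + D) (hε₂ : 0 ≤ ε₂)
    (hD : (R * Rᵀ - D * Dᵀ).PosSemidef)
    (hblock : (fromBlocks
        (ε₂ • (G * (X * Xᵀ - R * Rᵀ) * Gᵀ) - ε₁ • 1)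
        (-Mᵀ - ε₂ • (G * X * Wbᵀ))
        (-M - ε₂ • (Wb * Xᵀ * Gᵀ))
        (ε₂ • (Wb * Wbᵀ))).PosSemidef) :
    (-(G * S * M + (G * S * M)ᵀ) - ε₁ • 1).PosSemidef := by
  subst hX
  have hcongr := hblock.conjTranspose_mul_mul_same (fromRows (1 : Matrix ι ι ℝ) (G * S)ᵀ)
  rw [conjTranspose_eq_transpose_of_trivial,
    fromRows_transpose_mul_fromBlocks_mul_fromRows] at hcongr
  simpa using hcongr.add ((hD.mul_mul_conjTranspose_same G).smul hε₂)

theorem Matrix.PosSemidef.two_mul_dotProduct_mulVec_le {K : Matrix ι ι ℝ} {ε : ℝ}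
    (hK : (-(K + Kᵀ) - ε • 1).PosSemidef) (v : ι → ℝ) :
    2 * (v ⬝ᵥ K *ᵥ v) ≤ -ε * (v ⬝ᵥ v) := by
  have h := hK.dotProduct_mulVec_nonneg v
  simp only [star_trivial, sub_mulVec, neg_mulVec, add_mulVec, smul_mulVec, one_mulVec,
    dotProduct_sub, dotProduct_neg, dotProduct_add, dotProduct_smul, smul_eq_mul] at h
  rw [dotProduct_mulVec v Kᵀ, vecMul_transpose, dotProduct_comm] at h
  linarith [dotProduct_comm (K *ᵥ v) v]

end LMI

theorem lyapunov_decrease_thm2_general {n m N q p T : ℕ}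
    (A : Matrix (Fin n) (Fin N) ℝ) (B : Matrix (Fin n) (Fin q) ℝ)
    (Zf : (Fin n → ℝ) → (Fin N → ℝ))
    (W : (Fin n → ℝ) → Matrix (Fin q) (Fin m) ℝ)
    (Zhat : (Fin n → ℝ) → (Fin p → ℝ))
    (Hm : (Fin n → ℝ) → Matrix (Fin N) (Fin p) ℝ)
    (G : (Fin n → ℝ) → Matrix (Fin p) (Fin n) ℝ)
    -- `Ẑ` is differentiable with Jacobian `G(x)` at every point
    (hZhat : ∀ y : Fin n → ℝ,
      HasFDerivAt Zhat ((Matrix.mulVecLin (G y)).toContinuousLinearMap) y)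
    -- `Z(x) = H(x) Ẑ(x)`
    (hZH : ∀ y : Fin n → ℝ, Zf y = (Hm y).mulVec (Zhat y))
    (U₀ : Matrix (Fin m) (Fin T) ℝ) (Z₀ : Matrix (Fin N) (Fin T) ℝ)
    (Ubar₀ : Matrix (Fin q) (Fin T) ℝ)
    (D₀ X₁ : Matrix (Fin n) (Fin T) ℝ)
    (R_D : Matrix (Fin n) (Fin T) ℝ)
    -- the data equation
    (hdata : X₁ = A * Z₀ + B * Ubar₀ + D₀)
    -- bound on the noise
    (hD : (R_D * R_Dᵀ - D₀ * D₀ᵀ).PosSemidef)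
    (P : Matrix (Fin p) (Fin p) ℝ) (hP : P.PosDef)
    (Y : (Fin n → ℝ) → Matrix (Fin T) (Fin p) ℝ)
    (ε₁ ε₂ : (Fin n → ℝ) → ℝ) (hε₂ : ∀ y, 0 ≤ ε₂ y)
    -- consistency condition (i): `Z₀ Y(x) = H(x) P`
    (hcons : ∀ y : Fin n → ℝ, Z₀ * Y y = Hm y * P)
    -- pointwise positive semidefiniteness condition (ii), with
    -- `W̄₀ := [Ū₀ ; Z₀]` and `W₀(x) := [W(x) U₀ ; Z₀]`
    (hblock : ∀ y : Fin n → ℝ,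
      (fromBlocks
        (ε₂ y • (G y * (X₁ * X₁ᵀ - R_D * R_Dᵀ) * (G y)ᵀ)
          - ε₁ y • (1 : Matrix (Fin p) (Fin p) ℝ))
        (-((Y y)ᵀ * (fromRows (W y * U₀) Z₀)ᵀ)
          - ε₂ y • (G y * X₁ * (fromRows Ubar₀ Z₀)ᵀ))
        (-((fromRows (W y * U₀) Z₀) * Y y)
          - ε₂ y • ((fromRows Ubar₀ Z₀) * X₁ᵀ * (G y)ᵀ))
        (ε₂ y • ((fromRows Ubar₀ Z₀) * (fromRows Ubar₀ Z₀)ᵀ))).PosSemidef)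
    -- a differentiable solution of the closed-loop system
    (x : ℝ → (Fin n → ℝ))
    (hx : ∀ t : ℝ, HasDerivAt x
      (A.mulVec (Zf (x t)) + (B * W (x t) * U₀ * Y (x t) * P⁻¹).mulVec (Zhat (x t))) t) :
    ∀ t : ℝ, ∃ d : ℝ,
      HasDerivAt (fun s => Zhat (x s) ⬝ᵥ (P⁻¹.mulVec (Zhat (x s)))) d t ∧
      d ≤ -(ε₁ (x t)) * (Zhat (x t) ⬝ᵥ ((P⁻¹ * P⁻¹).mulVec (Zhat (x t)))) := by
  intro t
  set y := x t
  set v := P⁻¹ *ᵥ Zhat y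
  set S := fromCols B A
  set M := fromRows (W y * U₀) Z₀ * Y y
  have hPinv : (P⁻¹).IsSymm := isHermitian_iff_isSymm.mp hP.isHermitian.inv
  have hfield : A *ᵥ Zf y + (B * W y * U₀ * Y y * P⁻¹) *ᵥ Zhat y = (S * M) *ᵥ v := by
    have hH : Hm y = Z₀ * Y y * P⁻¹ := by
      rw [hcons y, Matrix.mul_assoc, mul_nonsing_inv P hP.det_pos.ne'.isUnit, Matrix.mul_one]
    simp only [v, S, M, hZH, hH, ← Matrix.mul_assoc, fromCols_mul_fromRows, mulVec_mulVec,
      Matrix.add_mul, add_mulVec, add_comm]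
  have hZx : HasDerivAt (fun s => Zhat (x s)) ((G y * S * M) *ᵥ v) t := by
    have := (hZhat y).comp_hasDerivAt t (hx t)
    rwa [LinearMap.coe_toContinuousLinearMap', mulVecLin_apply, hfield, mulVec_mulVec,
      ← Matrix.mul_assoc] at this
  refine ⟨2 * (v ⬝ᵥ (G y * S * M) *ᵥ v), ?_, ?_⟩
  · simpa only [dotProduct_comm] using hZx.dotProduct_mulVec_self hPinv
  · have hX₁ : X₁ = S * fromRows Ubar₀ Z₀ + D₀ := by
      rw [hdata, fromCols_mul_fromRows, add_comm (A * Z₀)]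
    have hblock' := hblock y
    rw [← transpose_mul] at hblock'
    have hlyap := posSemidef_neg_add_transpose_sub_smul_of_fromBlocks hX₁ (hε₂ y) hD hblock'
    have hV : Zhat y ⬝ᵥ (P⁻¹ * P⁻¹) *ᵥ Zhat y = v ⬝ᵥ v := by
      rw [← mulVec_mulVec, dotProduct_mulVec, ← mulVec_transpose, hPinv.eq]
    rw [hV]
    exact hlyap.two_mul_dotProduct_mulVec_le v

/-- Lyapunov decrease conclusion of Theorem 2 (no bound on `B` assumed), with the SOS
conditions relaxed to pointwise positive semidefiniteness: along every solution of the
closed-loop system `ẋ = A Z(x) + B W(x) U₀ Y(x) P⁻¹ Ẑ(x)`, the function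
`V(x) = Ẑ(x)ᵀ P⁻¹ Ẑ(x)` satisfies
`d/dt V(x(t)) ≤ −ε₁(x(t)) Ẑ(x(t))ᵀ P⁻¹ P⁻¹ Ẑ(x(t))`. -/
theorem lyapunov_decrease_thm2 {n m N q p T : ℕ}
    (A : Matrix (Fin n) (Fin N) ℝ) (B : Matrix (Fin n) (Fin q) ℝ)
    (Zf : (Fin n → ℝ) → (Fin N → ℝ))
    (W : (Fin n → ℝ) → Matrix (Fin q) (Fin m) ℝ)
    (Zhat : (Fin n → ℝ) → (Fin p → ℝ))
    (Hm : (Fin n → ℝ) → Matrix (Fin N) (Fin p) ℝ)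
    (G : (Fin n → ℝ) → Matrix (Fin p) (Fin n) ℝ)
    -- `Ẑ` is differentiable with Jacobian `G(x)` at every point
    (hZhat : ∀ y : Fin n → ℝ,
      HasFDerivAt Zhat ((Matrix.mulVecLin (G y)).toContinuousLinearMap) y)
    -- `Z(x) = H(x) Ẑ(x)`
    (hZH : ∀ y : Fin n → ℝ, Zf y = (Hm y).mulVec (Zhat y))
    (U₀ : Matrix (Fin m) (Fin T) ℝ) (Z₀ : Matrix (Fin N) (Fin T) ℝ)
    (Ubar₀ : Matrix (Fin q) (Fin T) ℝ)
    (D₀ X₁ : Matrix (Fin n) (Fin T) ℝ)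
    (R_D : Matrix (Fin n) (Fin T) ℝ)
    -- the data equation
    (hdata : X₁ = A * Z₀ + B * Ubar₀ + D₀)
    -- bound on the noise
    (hD : (R_D * R_Dᵀ - D₀ * D₀ᵀ).PosSemidef)
    (P : Matrix (Fin p) (Fin p) ℝ) (hP : P.PosDef)
    (Y : (Fin n → ℝ) → Matrix (Fin T) (Fin p) ℝ)
    (ε₁ ε₂ : (Fin n → ℝ) → ℝ) (hε₁ : ∀ y, 0 ≤ ε₁ y) (hε₂ : ∀ y, 0 ≤ ε₂ y)
    -- consistency condition (i): `Z₀ Y(x) = H(x) P`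
    (hcons : ∀ y : Fin n → ℝ, Z₀ * Y y = Hm y * P)
    -- pointwise positive semidefiniteness condition (ii), with
    -- `W̄₀ := [Ū₀ ; Z₀]` and `W₀(x) := [W(x) U₀ ; Z₀]`
    (hblock : ∀ y : Fin n → ℝ,
      (fromBlocks
        (ε₂ y • (G y * (X₁ * X₁ᵀ - R_D * R_Dᵀ) * (G y)ᵀ)
          - ε₁ y • (1 : Matrix (Fin p) (Fin p) ℝ))
        (-((Y y)ᵀ * (fromRows (W y * U₀) Z₀)ᵀ)
          - ε₂ y • (G y * X₁ * (fromRows Ubar₀ Z₀)ᵀ))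
        (-((fromRows (W y * U₀) Z₀) * Y y)
          - ε₂ y • ((fromRows Ubar₀ Z₀) * X₁ᵀ * (G y)ᵀ))
        (ε₂ y • ((fromRows Ubar₀ Z₀) * (fromRows Ubar₀ Z₀)ᵀ))).PosSemidef)
    -- a differentiable solution of the closed-loop system
    (x : ℝ → (Fin n → ℝ))
    (hx : ∀ t : ℝ, HasDerivAt x
      (A.mulVec (Zf (x t)) + (B * W (x t) * U₀ * Y (x t) * P⁻¹).mulVec (Zhat (x t))) t) :
    ∀ t : ℝ, ∃ d : ℝ,
      HasDerivAt (fun s => Zhat (x s) ⬝ᵥ (P⁻¹.mulVec (Zhat (x s)))) d t ∧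
      d ≤ -(ε₁ (x t)) * (Zhat (x t) ⬝ᵥ ((P⁻¹ * P⁻¹).mulVec (Zhat (x t)))) :=
  lyapunov_decrease_thm2_general A B Zf W Zhat Hm G hZhat hZH U₀ Z₀ Ubar₀ D₀ X₁ R_D hdata hD P hP Y
    ε₁ ε₂ hε₂ hcons hblock x hx
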